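/- Let λ = μ > 0 and ν > 0 be real numbers, let i be a natural number, and let s ∈ (0,1), t > 0. Define G(s,t) = ( (λt + s(1 − λt)) / (1 + λt − λts) )^i · (1 + λt − λts)^{−ν/λ} (the i-th power is an integer power, the real exponent is a real power of the positive base 1 + λt − λts). Then G satisfies ∂G/∂t (s,t) = (μ − λs)(1 − s) ∂G/∂s (s,t) + ν(s − 1) G(s,t) (with μ = λ), and G(s,0) = s^i for all s ∈ (0,1). -/

import Mathlib

/-!
With `μ = λ` the equation reads `L G = ν (s - 1) G` for the operator `L = ∂ₜ - λ (1 - s)² ∂ₛ`.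
Writing `G = (N / D) ^ i * D ^ (-ν/λ)` with `N = λt + s(1 - λt)` and `D = 1 + λt - λts`, one
checks `L N = λ (1 - s) N` and `L D = λ (1 - s) D`. Equations of the form `L f = b f` behave
like logarithmic derivatives: the rates `b` add under products, subtract under quotients and
scale under powers. Hence `N / D` is a first integral of `L`, and `D ^ (-ν/λ)` has rate
`-(ν/λ) λ (1 - s) = ν (s - 1)`.
-/

open Real

/-- The candidate probability generating function of the linear birth and death
process with immigration in the critical case `λ = μ`, as a function of `s` and `t`. -/
noncomputable def G (lam nu : ℝ) (i : ℕ) (s t : ℝ) : ℝ :=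
  ((lam * t + s * (1 - lam * t)) / (1 + lam * t - lam * t * s)) ^ i *
    (1 + lam * t - lam * t * s) ^ (-(nu / lam))

def SatisfiesTransportAt (a b : ℝ) (f : ℝ → ℝ → ℝ) (s t : ℝ) : Prop :=
  ∃ fs ft, HasDerivAt (f · t) fs s ∧ HasDerivAt (f s ·) ft t ∧ ft = a * fs + b * f s t

namespace SatisfiesTransportAt

variable {a b c : ℝ} {f g : ℝ → ℝ → ℝ} {s t : ℝ}

theorem deriv_eq (hf : SatisfiesTransportAt a b f s t) :
    deriv (f s ·) t = a * deriv (f · t) s + b * f s t := by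
  obtain ⟨fs, ft, hfs, hft, h⟩ := hf
  rw [hfs.deriv, hft.deriv, h]

theorem mul (hf : SatisfiesTransportAt a b f s t) (hg : SatisfiesTransportAt a c g s t) :
    SatisfiesTransportAt a (b + c) (fun σ τ => f σ τ * g σ τ) s t := by
  obtain ⟨fs, ft, hfs, hft, hf⟩ := hf
  obtain ⟨gs, gt, hgs, hgt, hg⟩ := hg
  exact ⟨_, _, hfs.mul hgs, hft.mul hgt, by rw [hf, hg]; ring⟩

theorem div (hf : SatisfiesTransportAt a b f s t) (hg : SatisfiesTransportAt a c g s t)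
    (hg0 : g s t ≠ 0) :
    SatisfiesTransportAt a (b - c) (fun σ τ => f σ τ / g σ τ) s t := by
  obtain ⟨fs, ft, hfs, hft, hf⟩ := hf
  obtain ⟨gs, gt, hgs, hgt, hg⟩ := hg
  exact ⟨_, _, hfs.div hgs hg0, hft.div hgt hg0, by rw [hf, hg]; field_simp; ring⟩

theorem pow (hf : SatisfiesTransportAt a b f s t) (n : ℕ) :
    SatisfiesTransportAt a (n * b) (fun σ τ => f σ τ ^ n) s t := by
  obtain ⟨fs, ft, hfs, hft, hf⟩ := hf
  refine ⟨_, _, hfs.pow n, hft.pow n, ?_⟩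
  rcases n with _ | n
  · simp
  · simp only [Nat.add_sub_cancel, hf, pow_succ]
    ring

theorem rpow_const (hf : SatisfiesTransportAt a b f s t) (hf0 : f s t ≠ 0) (p : ℝ) :
    SatisfiesTransportAt a (p * b) (fun σ τ => f σ τ ^ p) s t := by
  obtain ⟨fs, ft, hfs, hft, hf⟩ := hf
  refine ⟨_, _, hfs.rpow_const (Or.inl hf0), hft.rpow_const (Or.inl hf0), ?_⟩
  rw [rpow_sub_one hf0, hf]
  field_simp

end SatisfiesTransportAt

theorem G_zero (lam nu : ℝ) (i : ℕ) (σ : ℝ) : G lam nu i σ 0 = σ ^ i := by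
  simp [G]

section CriticalBirthDeath

variable (lam s t : ℝ)

theorem satisfiesTransportAt_numerator :
    SatisfiesTransportAt (lam * (1 - s) ^ 2) (lam * (1 - s))
      (fun σ τ => lam * τ + σ * (1 - lam * τ)) s t := by
  refine ⟨_, _, ((hasDerivAt_id s).mul_const (1 - lam * t)).const_add (lam * t),
    ((hasDerivAt_id t).const_mul lam).add
      ((((hasDerivAt_id t).const_mul lam).const_sub 1).const_mul s), ?_⟩
  ring

theorem satisfiesTransportAt_denominator :
    SatisfiesTransportAt (lam * (1 - s) ^ 2) (lam * (1 - s))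
      (fun σ τ => 1 + lam * τ - lam * τ * σ) s t := by
  refine ⟨_, _, ((hasDerivAt_id s).const_mul (lam * t)).const_sub (1 + lam * t),
    (((hasDerivAt_id t).const_mul lam).const_add 1).sub
      (((hasDerivAt_id t).const_mul lam).mul_const s), ?_⟩
  ring

theorem satisfiesTransportAt_G (nu : ℝ) (i : ℕ) (hlam : lam ≠ 0)
    (hD : 1 + lam * t - lam * t * s ≠ 0) :
    SatisfiesTransportAt (lam * (1 - s) ^ 2) (nu * (s - 1)) (G lam nu i) s t := by
  have h := (((satisfiesTransportAt_numerator lam s t).div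
    (satisfiesTransportAt_denominator lam s t) hD).pow i).mul
    ((satisfiesTransportAt_denominator lam s t).rpow_const hD (-(nu / lam)))
  have hb : nu * (s - 1)
      = i * (lam * (1 - s) - lam * (1 - s)) + -(nu / lam) * (lam * (1 - s)) := by
    field_simp
    ring
  rwa [hb]

end CriticalBirthDeath

theorem stmt_1_general (lam mu nu s t : ℝ) (i : ℕ)
    (hlam : 0 < lam) (hlm : lam = mu)
    (hs1 : s < 1) (ht : 0 < t) :
    deriv (fun τ => G lam nu i s τ) t
        = (mu - lam * s) * (1 - s) * deriv (fun σ => G lam nu i σ t) s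
          + nu * (s - 1) * G lam nu i s t
      ∧ ∀ σ ∈ Set.Ioo (0 : ℝ) 1, G lam nu i σ 0 = σ ^ i := by
  subst hlm
  have hD : 1 + lam * t - lam * t * s ≠ 0 := by
    nlinarith [mul_pos (mul_pos hlam ht) (sub_pos.mpr hs1)]
  refine ⟨?_, fun σ _ => G_zero lam nu i σ⟩
  rw [(satisfiesTransportAt_G lam s t nu i hlam.ne' hD).deriv_eq]
  ring

/-- In the case `λ = μ`, `G` solves the first-order linear PDE
`∂G/∂t = (μ - λ s)(1 - s) ∂G/∂s + ν (s - 1) G` with initial condition `G(s,0) = s^i`. -/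
theorem stmt_1 (lam mu nu s t : ℝ) (i : ℕ)
    (hlam : 0 < lam) (hlm : lam = mu) (hnu : 0 < nu)
    (hs : 0 < s) (hs1 : s < 1) (ht : 0 < t) :
    deriv (fun τ => G lam nu i s τ) t
        = (mu - lam * s) * (1 - s) * deriv (fun σ => G lam nu i σ t) s
          + nu * (s - 1) * G lam nu i s t
      ∧ ∀ σ ∈ Set.Ioo (0 : ℝ) 1, G lam nu i σ 0 = σ ^ i :=
  stmt_1_general lam mu nu s t i hlam hlm hs1 ht
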